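/- arXiv:2112.05001 — 2 statements merged into one kernel-verified Lean document; each statement's English description precedes it below -/
import Mathlib

section
/- Let G be a finite group, Γ a group, and X a G-set. The set Fix_{Γ,G}(X) = {(α, x) ∈ Hom(Γ,G) × X : α(γ)·x = x for all γ ∈ Γ}, with G acting by g·(α,x) = (gαg⁻¹, g·x), is G-equivariantly bijective to the disjoint union over representatives α of the conjugation orbits of Hom(Γ,G) of the induced G-sets G ×_{C_G(α(Γ))} X^{α(Γ)}. -/
/-!
The projection `(α, x) ↦ α` is a `G`-equivariant map from `Fix_{Γ,G}(X)` onto `Hom(Γ,G)`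
with the conjugation action. Its fibre over `α` is `X^{α(Γ)}`, and the stabiliser of `α` is
`C_G(α(Γ))`. So, orbit by orbit of the base, `(q, [g, y]) ↦ g • (α_q, y)` with `α_q` the chosen
representative of `q` is a bijection onto `Fix_{Γ,G}(X)`, and it is visibly equivariant.
-/

variable {Γ G X : Type*} [Group Γ] [Group G] [MulAction G X]

/-- `Fix_{Γ,G}(X) = {(α,x) : α(γ)•x = x for all γ}`. -/
def FixPts (Γ G X : Type*) [Group Γ] [Group G] [MulAction G X] : Type _ :=
  {q : (Γ →* G) × X // ∀ γ : Γ, q.1 γ • q.2 = q.2}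

/-- Conjugation of a homomorphism `α : Γ → G` by `g ∈ G`. -/
def conjHom (g : G) (α : Γ →* G) : Γ →* G :=
  ((MulAut.conj g).toMonoidHom).comp α

/-- The `G`-action on `Fix_{Γ,G}(X)`: `g • (α,x) = (gαg⁻¹, g•x)`. -/
def fixSmul (g : G) (q : FixPts Γ G X) : FixPts Γ G X :=
  ⟨(conjHom g q.1.1, g • q.1.2), by
    intro γ
    simp only [conjHom, MonoidHom.comp_apply, MulEquiv.coe_toMonoidHom, MulAut.conj_apply,
      mul_smul, inv_smul_smul]
    rw [q.2 γ]⟩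

/-- The conjugation equivalence relation on `Hom(Γ,G)`. -/
def conjSetoid (Γ G : Type*) [Group Γ] [Group G] : Setoid (Γ →* G) where
  r α β := ∃ g : G, β = conjHom g α
  iseqv := by
    constructor
    · exact fun α => ⟨1, by ext γ; simp [conjHom]⟩
    · rintro α β ⟨g, rfl⟩
      exact ⟨g⁻¹, by ext γ; simp [conjHom, mul_assoc]⟩
    · rintro α β δ ⟨g, rfl⟩ ⟨g', rfl⟩
      exact ⟨g' * g, by ext γ; simp [conjHom, mul_assoc]⟩

/-- The fixed points `X^{α(Γ)}`. -/
def fixedByHom (α : Γ →* G) (X : Type*) [MulAction G X] : Type _ :=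
  {x : X // ∀ γ : Γ, α γ • x = x}

/-- The action of the centralizer `C_G(α(Γ))` on `X^{α(Γ)}`. -/
def centAct (α : Γ →* G) (k : Subgroup.centralizer (Set.range α)) (x : fixedByHom α X) :
    fixedByHom α X :=
  ⟨(k : G) • x.1, by
    intro γ
    rw [smul_smul, k.2 (α γ) ⟨γ, rfl⟩, ← smul_smul, x.2 γ]⟩

/-- The induced `G`-set `G ×_K Y`: quotient of `G × Y` by `(gk, y) ~ (g, k·y)`. -/
def IndGSet (K : Subgroup G) (Y : Type*) (act : K → Y → Y) : Type _ :=
  Quot (fun a b : G × Y => ∃ k : K, a.1 = b.1 * k ∧ b.2 = act k a.2)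

/-- `G` acts on `G ×_K Y` by left multiplication on the first factor. -/
def indSmul (K : Subgroup G) (Y : Type*) (act : K → Y → Y) (g : G) :
    IndGSet K Y act → IndGSet K Y act :=
  Quot.map (fun a => (g * a.1, a.2)) (by
    rintro a b ⟨k, h1, h2⟩
    exact ⟨k, by simp only []; rw [h1, mul_assoc], h2⟩)

lemma conjHom_apply (g : G) (α : Γ →* G) (γ : Γ) : conjHom g α γ = g * α γ * g⁻¹ := rfl

lemma conjHom_mul (g h : G) (α : Γ →* G) : conjHom (g * h) α = conjHom g (conjHom h α) := by
  ext γ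
  simp only [conjHom_apply, mul_inv_rev]
  group

lemma conjHom_eq_self_iff (k : G) (α : Γ →* G) :
    conjHom k α = α ↔ k ∈ Subgroup.centralizer (Set.range α) := by
  simp only [DFunLike.ext_iff, conjHom_apply, mul_inv_eq_iff_eq_mul, Subgroup.mem_centralizer_iff,
    Set.forall_mem_range]
  exact forall_congr' fun γ => eq_comm

lemma conjHom_one (α : Γ →* G) : conjHom 1 α = α := by
  ext γ
  simp [conjHom_apply]

lemma fixSmul_one (p : FixPts Γ G X) : fixSmul 1 p = p := by
  apply Subtype.ext
  simp only [fixSmul, conjHom_one, one_smul]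

lemma fixSmul_mul (g h : G) (p : FixPts Γ G X) :
    fixSmul (g * h) p = fixSmul g (fixSmul h p) := by
  apply Subtype.ext
  simp only [fixSmul, conjHom_mul, mul_smul]

def FixPts.ofFixedByHom (α : Γ →* G) (y : fixedByHom α X) : FixPts Γ G X :=
  ⟨(α, y.1), y.2⟩

def FixPts.toFixedByHom (p : FixPts Γ G X) {α : Γ →* G} (h : p.1.1 = α) : fixedByHom α X :=
  ⟨p.1.2, h ▸ p.2⟩

lemma FixPts.ofFixedByHom_toFixedByHom (p : FixPts Γ G X) {α : Γ →* G} (h : p.1.1 = α) :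
    FixPts.ofFixedByHom α (p.toFixedByHom h) = p := by
  subst h
  rfl

lemma fixSmul_ofFixedByHom_of_mem_centralizer (α : Γ →* G)
    (k : Subgroup.centralizer (Set.range α)) (y : fixedByHom α X) :
    fixSmul (k : G) (FixPts.ofFixedByHom α y) = FixPts.ofFixedByHom α (centAct α k y) := by
  apply Subtype.ext
  simp only [fixSmul, FixPts.ofFixedByHom, centAct, (conjHom_eq_self_iff _ α).2 k.2]

lemma mem_centralizer_of_fixSmul_ofFixedByHom_eq {α : Γ →* G} {k : G} {y y' : fixedByHom α X}
    (h : fixSmul k (FixPts.ofFixedByHom α y) = FixPts.ofFixedByHom α y') :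
    ∃ hk : k ∈ Subgroup.centralizer (Set.range α), centAct α ⟨k, hk⟩ y = y' := by
  have hk := (conjHom_eq_self_iff k α).1 (congrArg (fun p : FixPts Γ G X => p.1.1) h)
  exact ⟨hk, Subtype.ext (congrArg (fun p : FixPts Γ G X => p.1.2) h)⟩

def indToFixPts (α : Γ →* G) :
    IndGSet (Subgroup.centralizer (Set.range α)) (fixedByHom α X) (centAct α) → FixPts Γ G X :=
  Quot.lift (fun a => fixSmul a.1 (FixPts.ofFixedByHom α a.2)) <| by
    rintro ⟨g, y⟩ ⟨g', y'⟩ ⟨k, hg, hy⟩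
    dsimp only at hg hy
    subst hg hy
    simp only [fixSmul_mul, fixSmul_ofFixedByHom_of_mem_centralizer]

lemma indToFixPts_indSmul (α : Γ →* G) (g : G)
    (u : IndGSet (Subgroup.centralizer (Set.range α)) (fixedByHom α X) (centAct α)) :
    indToFixPts α (indSmul _ _ _ g u) = fixSmul g (indToFixPts α u) := by
  induction u using Quot.ind
  exact fixSmul_mul _ _ _

noncomputable def sigmaToFixPts :
    (Σ q : Quotient (conjSetoid Γ G),
      IndGSet (Subgroup.centralizer (Set.range ⇑(Quotient.out (s := conjSetoid Γ G) q)))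
        (fixedByHom (Quotient.out q) X) (centAct (X := X) (Quotient.out q))) → FixPts Γ G X :=
  fun s => indToFixPts s.1.out s.2

lemma sigmaToFixPts_injective : Function.Injective (sigmaToFixPts (Γ := Γ) (G := G) (X := X)) := by
  rintro ⟨q, u⟩ ⟨q', u'⟩ h
  induction u using Quot.ind with | _ a =>
  induction u' using Quot.ind with | _ a' =>
  obtain ⟨g, y⟩ := a
  obtain ⟨g', y'⟩ := a'
  have h' : fixSmul (g'⁻¹ * g) (FixPts.ofFixedByHom q.out y) = FixPts.ofFixedByHom q'.out y' := by
    change fixSmul g _ = fixSmul g' _ at h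
    rw [fixSmul_mul, h, ← fixSmul_mul, inv_mul_cancel, fixSmul_one]
  have hq : q = q' := by
    rw [← q.out_eq, ← q'.out_eq]
    exact Quotient.sound ⟨_, (congrArg (fun p : FixPts Γ G X => p.1.1) h').symm⟩
  subst hq
  obtain ⟨hk, hy⟩ := mem_centralizer_of_fixSmul_ofFixedByHom_eq h'
  congr 1
  exact Quot.sound ⟨⟨g'⁻¹ * g, hk⟩, by simp, hy.symm⟩

lemma sigmaToFixPts_surjective :
    Function.Surjective (sigmaToFixPts (Γ := Γ) (G := G) (X := X)) := by
  intro p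
  obtain ⟨g, hg⟩ : ∃ g : G, p.1.1 = conjHom g (Quotient.mk (conjSetoid Γ G) p.1.1).out :=
    Quotient.mk_out (s := conjSetoid Γ G) p.1.1
  have hout : (fixSmul g⁻¹ p).1.1 = (Quotient.mk (conjSetoid Γ G) p.1.1).out := by
    change conjHom g⁻¹ p.1.1 = _
    nth_rw 1 [hg]
    rw [← conjHom_mul, inv_mul_cancel, conjHom_one]
  refine ⟨⟨_, Quot.mk _ (g, (fixSmul g⁻¹ p).toFixedByHom hout)⟩, ?_⟩
  change fixSmul g (FixPts.ofFixedByHom _ _) = p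
  rw [FixPts.ofFixedByHom_toFixedByHom, ← fixSmul_mul, mul_inv_cancel, fixSmul_one]

theorem stmt2_general (Γ G X : Type*) [Group Γ] [Group G] [MulAction G X] :
    ∃ e : FixPts Γ G X ≃
        (Σ q : Quotient (conjSetoid Γ G),
          IndGSet (Subgroup.centralizer (Set.range ⇑(Quotient.out (s := conjSetoid Γ G) q)))
            (fixedByHom (Quotient.out q) X) (centAct (X := X) (Quotient.out q))),
      ∀ (g : G) (p : FixPts Γ G X),
        e (fixSmul g p) = ⟨(e p).1, indSmul _ _ _ g (e p).2⟩ := by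
  let E := Equiv.ofBijective _ ⟨sigmaToFixPts_injective (Γ := Γ) (G := G) (X := X),
    sigmaToFixPts_surjective⟩
  refine ⟨E.symm, fun g p => ?_⟩
  rw [Equiv.symm_apply_eq]
  calc fixSmul g p = fixSmul g (E (E.symm p)) := by rw [E.apply_symm_apply]
    _ = E ⟨(E.symm p).1, indSmul _ _ _ g (E.symm p).2⟩ := (indToFixPts_indSmul _ g _).symm

/-- `Fix_{Γ,G}(X)` is `G`-equivariantly bijective to the disjoint
union, over representatives `α` of the conjugation orbits of `Hom(Γ,G)`, of the
induced `G`-sets `G ×_{C_G(α(Γ))} X^{α(Γ)}`. -/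
theorem stmt2 (Γ G X : Type*) [Group Γ] [Group G] [Finite G] [MulAction G X] :
    ∃ e : FixPts Γ G X ≃
        (Σ q : Quotient (conjSetoid Γ G),
          IndGSet (Subgroup.centralizer (Set.range ⇑(Quotient.out (s := conjSetoid Γ G) q)))
            (fixedByHom (Quotient.out q) X) (centAct (X := X) (Quotient.out q))),
      ∀ (g : G) (p : FixPts Γ G X),
        e (fixSmul g p) = ⟨(e p).1, indSmul _ _ _ g (e p).2⟩ :=
  stmt2_general Γ G X
end

section
/- Let Γ be a group and G a finite group. The functor Fix_{Γ,G} from G-sets to G-sets preserves pushouts along injections: if X = X₁ ∪_{X₀} X₂ is a pushout of G-sets with X₀ → X₁ injective, then Fix_{Γ,G}(X) is the pushout of Fix_{Γ,G}(X₁) ← Fix_{Γ,G}(X₀) → Fix_{Γ,G}(X₂). -/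
variable {Γ G X : Type*} [Group Γ] [Group G] [MulAction G X]

/-- The map `Fix_{Γ,G}(X) → Fix_{Γ,G}(Y)` induced by a `G`-map `f : X → Y`. -/
def fixMap {Y : Type*} [MulAction G Y] (f : X → Y) (hf : ∀ (g : G) (x : X), f (g • x) = g • f x)
    (p : FixPts Γ G X) : FixPts Γ G Y :=
  ⟨(p.1.1, f p.1.2), by intro γ; rw [← hf, p.2 γ]⟩

universe u

/-!
Over `Type`, a commuting square along an injection `i₁` is a pushout exactly when it is a
pullback, `j₂` is injective, `j₁` and `j₂` are jointly surjective and `j₁` is injective off the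
range of `i₁` (`Types.isPushout_of_isPullback_of_mono'`). Each of these properties passes to
`Fix_{Γ,G}(X) ⊆ Hom(Γ,G) × X`: an injective equivariant map reflects fixed points, and so does
`j₁` at points off the range of `i₁`, since `j₁ (g • x) = j₁ x` forces `g • x = x` there.
-/

open CategoryTheory Limits TypeCat

namespace CategoryTheory.Limits.Types

variable {X₀ X₁ X₂ X : Type u}

theorem isPushout_ofHom_iff (i₁ : X₀ → X₁) (i₂ : X₀ → X₂) (j₁ : X₁ → X) (j₂ : X₂ → X) :
    IsPushout (↾i₁) (↾i₂) (↾j₁) (↾j₂) ↔ j₁ ∘ i₁ = j₂ ∘ i₂ ∧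
      ∀ (Z : Type u) (k₁ : X₁ → Z) (k₂ : X₂ → Z), k₁ ∘ i₁ = k₂ ∘ i₂ →
        ∃! v : X → Z, v ∘ j₁ = k₁ ∧ v ∘ j₂ = k₂ := by
  constructor
  · intro h
    refine ⟨funext (types_congr_hom h.w), fun Z k₁ k₂ hk => ?_⟩
    obtain ⟨v, hv₁, hv₂⟩ := PushoutCocone.IsColimit.desc' h.isColimit (↾k₁) (↾k₂)
      (congrArg ofHom hk)
    refine ⟨v, ⟨funext (types_congr_hom hv₁), funext (types_congr_hom hv₂)⟩, ?_⟩
    rintro w ⟨hw₁, hw₂⟩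
    have : (↾w : X ⟶ Z) = v := PushoutCocone.IsColimit.hom_ext h.isColimit
      ((congrArg ofHom hw₁).trans hv₁.symm) ((congrArg ofHom hw₂).trans hv₂.symm)
    exact congrArg homEquiv this
  · rintro ⟨hcomm, hpo⟩
    have hdesc (s : PushoutCocone (↾i₁) (↾i₂)) :=
      hpo s.pt s.inl s.inr (funext (types_congr_hom s.condition))
    refine ⟨⟨congrArg ofHom hcomm⟩, ⟨PushoutCocone.IsColimit.mk _
      (fun s => ↾(hdesc s).exists.choose)
      (fun s => congrArg ofHom (hdesc s).exists.choose_spec.1)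
      (fun s => congrArg ofHom (hdesc s).exists.choose_spec.2)
      (fun s m hm₁ hm₂ => congrArg ofHom ((hdesc s).unique
        ⟨funext (types_congr_hom hm₁), funext (types_congr_hom hm₂)⟩
        (hdesc s).exists.choose_spec))⟩⟩

theorem eq_of_isPushout_of_notMem_range {X₃ X₄ : Type u} {t : X₁ ⟶ X₂} {l : X₁ ⟶ X₃}
    {r : X₂ ⟶ X₄} {b : X₃ ⟶ X₄} (h : IsPushout t l r b) (ht : Function.Injective t)
    {x y : X₂} (hx : x ∉ Set.range t) (hxy : r x = r y) : x = y := by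
  have : Mono t := (mono_iff_injective t).2 ht
  let e := h.isColimit.coconePointUniqueUpToIso (Pushout.isColimitCocone t l)
  have he (z : X₂) : e.hom (r z) = Pushout.inl t l z :=
    types_congr_hom (h.isColimit.comp_coconePointUniqueUpToIso_hom _ WalkingSpan.left) z
  have hrel := (Pushout.quot_mk_eq_iff t l (.inl x) (.inl y)).1
    ((he x).symm.trans ((congrArg e.hom hxy).trans (he y)))
  rw [Pushout.inl_rel'_inl_iff] at hrel
  rcases hrel with hxy | ⟨x₀, -, -, rfl, -⟩
  · exact hxy
  · exact absurd ⟨x₀, rfl⟩ hx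

end CategoryTheory.Limits.Types

section FixPts

variable {Y : Type*} [MulAction G Y] {f : X → Y} (hf : ∀ (g : G) (x : X), f (g • x) = g • f x)

theorem FixPts.ext {p q : FixPts Γ G X} (h₁ : p.1.1 = q.1.1) (h₂ : p.1.2 = q.1.2) : p = q :=
  Subtype.ext (Prod.ext h₁ h₂)

theorem fixMap_eq_iff {p : FixPts Γ G X} {q : FixPts Γ G Y} :
    fixMap f hf p = q ↔ p.1.1 = q.1.1 ∧ f p.1.2 = q.1.2 :=
  ⟨fun h => ⟨congrArg (·.1.1) h, congrArg (·.1.2) h⟩, fun h => FixPts.ext h.1 h.2⟩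

theorem fixMap_injective (hinj : Function.Injective f) :
    Function.Injective (fixMap (Γ := Γ) f hf) := fun _ _ h =>
  FixPts.ext (congrArg (·.1.1) h) (hinj (congrArg (·.1.2) h))

theorem mem_range_fixMap_iff (hinj : Function.Injective f) {q : FixPts Γ G Y} :
    q ∈ Set.range (fixMap f hf) ↔ q.1.2 ∈ Set.range f := by
  refine ⟨fun ⟨p, hp⟩ => ⟨p.1.2, congrArg (·.1.2) hp⟩, fun ⟨x, hx⟩ => ?_⟩
  refine ⟨⟨(q.1.1, x), fun γ => hinj ?_⟩, (fixMap_eq_iff hf).2 ⟨rfl, hx⟩⟩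
  rw [hf, hx, q.2 γ]

end FixPts

open CategoryTheory.Limits.Types in
theorem isPushout_fixMap {Γ G X₀ X₁ X₂ X : Type u} [Group Γ] [Group G]
    [MulAction G X₀] [MulAction G X₁] [MulAction G X₂] [MulAction G X]
    {i₁ : X₀ → X₁} {i₂ : X₀ → X₂} {j₁ : X₁ → X} {j₂ : X₂ → X}
    (hi₁ : ∀ (g : G) (x : X₀), i₁ (g • x) = g • i₁ x)
    (hi₂ : ∀ (g : G) (x : X₀), i₂ (g • x) = g • i₂ x)
    (hj₁ : ∀ (g : G) (x : X₁), j₁ (g • x) = g • j₁ x)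
    (hj₂ : ∀ (g : G) (x : X₂), j₂ (g • x) = g • j₂ x)
    (h : IsPushout (↾i₁) (↾i₂) (↾j₁) (↾j₂)) (hinj : Function.Injective i₁) :
    IsPushout (↾(fixMap (Γ := Γ) i₁ hi₁)) (↾(fixMap i₂ hi₂)) (↾(fixMap j₁ hj₁))
      (↾(fixMap j₂ hj₂)) := by
  have hj₂inj : Function.Injective j₂ := pushoutCocone_inr_injective_of_isColimit h.isColimit hinj
  have hpb : IsPullback (↾i₂) (↾i₁) (↾j₂) (↾j₁) := (isPullback_of_isPushout h hinj).flip
  have : Mono (↾(fixMap (Γ := Γ) j₂ hj₂)) :=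
    (ofHom_mono_iff_injective _).2 (fixMap_injective hj₂ hj₂inj)
  have hpbFix : IsPullback (↾(fixMap (Γ := Γ) i₂ hi₂)) (↾(fixMap i₁ hi₁)) (↾(fixMap j₂ hj₂))
      (↾(fixMap j₁ hj₁)) := by
    refine (isPullback_iff _ _ _ _).2
      ⟨?_, fun p q ⟨_, hpq⟩ => fixMap_injective hi₁ hinj hpq, fun p q hpq => ?_⟩
    · exact congrArg ofHom (funext fun p => FixPts.ext rfl (types_congr_hom h.w p.1.2).symm)
    obtain ⟨a, ha₂, ha₁⟩ := exists_of_isPullback hpb p.1.2 q.1.2 (congrArg (·.1.2) hpq)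
    obtain ⟨r, hr⟩ := (mem_range_fixMap_iff hi₁ hinj).2 ⟨a, ha₁⟩
    obtain ⟨hrq, hra⟩ := (fixMap_eq_iff hi₁).1 hr
    refine ⟨r, (fixMap_eq_iff hi₂).2 ⟨hrq.trans (congrArg (·.1.1) hpq).symm, ?_⟩, hr⟩
    rw [hinj (hra.trans ha₁.symm)]
    exact ha₂
  have hcover : Set.range (fixMap (Γ := Γ) j₂ hj₂) ⊔ Set.range (fixMap j₁ hj₁) = Set.univ := by
    refine Set.eq_univ_of_forall fun p => ?_
    rcases eq_or_eq_of_isPushout' h.flip p.1.2 with hx | ⟨x, hx, hxi⟩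
    · exact Or.inl ((mem_range_fixMap_iff hj₂ hj₂inj).2 hx)
    refine Or.inr ⟨⟨(p.1.1, x), fun γ => ?_⟩, (fixMap_eq_iff hj₁).2 ⟨rfl, hx⟩⟩
    refine (eq_of_isPushout_of_notMem_range h hinj hxi ?_).symm
    change j₁ x = j₁ (p.1.1 γ • x)
    rw [hj₁, show j₁ x = p.1.2 from hx, p.2 γ]
  refine (isPushout_of_isPullback_of_mono' hpbFix hcover fun p q hp _ hpq => ?_).flip
  have hpi : p.1.2 ∉ Set.range i₁ := fun hmem => hp ((mem_range_fixMap_iff hi₁ hinj).2 hmem)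
  exact FixPts.ext (congrArg (·.1.1) hpq)
    (eq_of_isPushout_of_notMem_range h hinj hpi (congrArg (·.1.2) hpq))

theorem stmt11_general (Γ G X₀ X₁ X₂ X : Type u) [Group Γ] [Group G]
    [MulAction G X₀] [MulAction G X₁] [MulAction G X₂] [MulAction G X]
    (i₁ : X₀ → X₁) (i₂ : X₀ → X₂) (j₁ : X₁ → X) (j₂ : X₂ → X)
    (hi₁ : ∀ (g : G) (x : X₀), i₁ (g • x) = g • i₁ x)
    (hi₂ : ∀ (g : G) (x : X₀), i₂ (g • x) = g • i₂ x)
    (hj₁ : ∀ (g : G) (x : X₁), j₁ (g • x) = g • j₁ x)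
    (hj₂ : ∀ (g : G) (x : X₂), j₂ (g • x) = g • j₂ x)
    (hinj : Function.Injective i₁)
    (hcomm : j₁ ∘ i₁ = j₂ ∘ i₂)
    (hpo : ∀ (Z : Type u) (k₁ : X₁ → Z) (k₂ : X₂ → Z), k₁ ∘ i₁ = k₂ ∘ i₂ →
      ∃! v : X → Z, v ∘ j₁ = k₁ ∧ v ∘ j₂ = k₂) :
    (fixMap (Γ := Γ) j₁ hj₁ ∘ fixMap i₁ hi₁ = fixMap j₂ hj₂ ∘ fixMap i₂ hi₂) ∧
    ∀ (Z : Type u) (k₁ : FixPts Γ G X₁ → Z) (k₂ : FixPts Γ G X₂ → Z),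
      k₁ ∘ fixMap i₁ hi₁ = k₂ ∘ fixMap i₂ hi₂ →
      ∃! v : FixPts Γ G X → Z,
        v ∘ fixMap j₁ hj₁ = k₁ ∧ v ∘ fixMap j₂ hj₂ = k₂ :=
  (Types.isPushout_ofHom_iff _ _ _ _).1 <| isPushout_fixMap hi₁ hi₂ hj₁ hj₂
    ((Types.isPushout_ofHom_iff _ _ _ _).2 ⟨hcomm, hpo⟩) hinj

/-- `Fix_{Γ,G}` preserves pushouts of `G`-sets along injections:
if `X = X₁ ∪_{X₀} X₂` is a pushout of `G`-sets (computed as a pushout of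
underlying sets) with `X₀ → X₁` injective, then `Fix_{Γ,G}(X)` is the pushout
of `Fix_{Γ,G}(X₁) ← Fix_{Γ,G}(X₀) → Fix_{Γ,G}(X₂)`. -/
theorem stmt11 (Γ G X₀ X₁ X₂ X : Type u) [Group Γ] [Group G] [Finite G]
    [MulAction G X₀] [MulAction G X₁] [MulAction G X₂] [MulAction G X]
    (i₁ : X₀ → X₁) (i₂ : X₀ → X₂) (j₁ : X₁ → X) (j₂ : X₂ → X)
    (hi₁ : ∀ (g : G) (x : X₀), i₁ (g • x) = g • i₁ x)
    (hi₂ : ∀ (g : G) (x : X₀), i₂ (g • x) = g • i₂ x)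
    (hj₁ : ∀ (g : G) (x : X₁), j₁ (g • x) = g • j₁ x)
    (hj₂ : ∀ (g : G) (x : X₂), j₂ (g • x) = g • j₂ x)
    (hinj : Function.Injective i₁)
    (hcomm : j₁ ∘ i₁ = j₂ ∘ i₂)
    (hpo : ∀ (Z : Type u) (k₁ : X₁ → Z) (k₂ : X₂ → Z), k₁ ∘ i₁ = k₂ ∘ i₂ →
      ∃! v : X → Z, v ∘ j₁ = k₁ ∧ v ∘ j₂ = k₂) :
    (fixMap (Γ := Γ) j₁ hj₁ ∘ fixMap i₁ hi₁ = fixMap j₂ hj₂ ∘ fixMap i₂ hi₂) ∧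
    ∀ (Z : Type u) (k₁ : FixPts Γ G X₁ → Z) (k₂ : FixPts Γ G X₂ → Z),
      k₁ ∘ fixMap i₁ hi₁ = k₂ ∘ fixMap i₂ hi₂ →
      ∃! v : FixPts Γ G X → Z,
        v ∘ fixMap j₁ hj₁ = k₁ ∧ v ∘ fixMap j₂ hj₂ = k₂ :=
  stmt11_general Γ G X₀ X₁ X₂ X i₁ i₂ j₁ j₂ hi₁ hi₂ hj₁ hj₂ hinj hcomm hpo
end
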